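/- Let n ≥ 2, 0 < λ ≤ Λ < ∞, and α ∈ (0,1). Then for every pair of matrices A₁, A₂ ∈ 𝒜(λ,Λ) there exists Q ∈ O(n) such that trace{ J_α (A₁ + A₂ − 2 A₂^{1/2} Q A₁^{1/2}) } ≤ 2[ (n−1)Λ − ((1−α) + n(1−α)^{1/n}) λ ]; that is, the minimum over Q ∈ O(n) of this trace is at most 2[(n−1)Λ − ((1−α) + n(1−α)^{1/n})λ]. -/

import Mathlib

open MeasureTheory Matrix

noncomputable section

abbrev EucSp (n : ℕ) := EuclideanSpace ℝ (Fin n)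

/-- Principal square root of a positive semidefinite matrix (zero otherwise). -/
noncomputable def msqrt {n : ℕ} (A : Matrix (Fin n) (Fin n) ℝ) : Matrix (Fin n) (Fin n) ℝ :=
  open scoped Classical in
  if h : A.PosSemidef then
    (h.1.eigenvectorUnitary : Matrix (Fin n) (Fin n) ℝ) *
      diagonal ((RCLike.ofReal : ℝ → ℝ) ∘ Real.sqrt ∘ h.1.eigenvalues) *
      (star h.1.eigenvectorUnitary : Matrix (Fin n) (Fin n) ℝ)
  else 0

/-- `A ∈ 𝒜(λ,Λ)`: symmetric and uniformly elliptic. -/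
def UnifElliptic {n : ℕ} (lam Lam : ℝ) (A : Matrix (Fin n) (Fin n) ℝ) : Prop :=
  A.IsSymm ∧ ∀ ξ : Fin n → ℝ,
    lam * (ξ ⬝ᵥ ξ) ≤ ξ ⬝ᵥ A.mulVec ξ ∧ ξ ⬝ᵥ A.mulVec ξ ≤ Lam * (ξ ⬝ᵥ ξ)

/-- Membership in the orthogonal group `O(n)`. -/
def IsOrthMat {n : ℕ} (Q : Matrix (Fin n) (Fin n) ℝ) : Prop :=
  Q * Qᵀ = 1 ∧ Qᵀ * Q = 1

/-- Matrix acting on Euclidean space. -/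
noncomputable def mvE {n : ℕ} (M : Matrix (Fin n) (Fin n) ℝ) (y : EucSp n) : EucSp n :=
  (EuclideanSpace.equiv (Fin n) ℝ).symm (M.mulVec ((EuclideanSpace.equiv (Fin n) ℝ) y))

/-- The ellipsoid `x + ε A^{1/2} 𝔹`. -/
noncomputable def ellipsoid {n : ℕ} (ε : ℝ) (M : Matrix (Fin n) (Fin n) ℝ) (x : EucSp n) :
    Set (EucSp n) :=
  (fun y => x + ε • mvE (msqrt M) y) '' Metric.ball (0 : EucSp n) 1

/-- The matrix `J_α = diag(α-1, 1, …, 1)`. -/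
noncomputable def Jmat (n : ℕ) (α : ℝ) : Matrix (Fin n) (Fin n) ℝ :=
  Matrix.diagonal (fun i => if (i : ℕ) = 0 then α - 1 else 1)

/-- Reflection in the first coordinate axis. -/
noncomputable def J0 (n : ℕ) : Matrix (Fin n) (Fin n) ℝ :=
  Matrix.diagonal (fun i => if (i : ℕ) = 0 then -1 else 1)

/-- The first standard basis vector `e₁`. -/
noncomputable def e1 (n : ℕ) : EucSp n :=
  (EuclideanSpace.equiv (Fin n) ℝ).symm (fun i => if (i : ℕ) = 0 then 1 else 0)

/-- `f₁(x,z) = C|x-z|^α + C̃|x+z|²`. -/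
noncomputable def f1 {n : ℕ} (α C Ct : ℝ) (x z : EucSp n) : ℝ :=
  C * ‖x - z‖ ^ α + Ct * ‖x + z‖ ^ 2

/-- The annular step function `f₂`. -/
noncomputable def f2 {n : ℕ} (α C lam ε : ℝ) (N : ℕ) (x z : EucSp n) : ℝ :=
  if ‖x - z‖ / (Real.sqrt lam * ε) > (N : ℝ) then 0
  else C ^ (2 * (2 * N - ⌈2 * ‖x - z‖ / (Real.sqrt lam * ε)⌉₊)) * ε ^ α

/-! With `Bᵢ = Aᵢ^{1/2}` and `M = B₁ J_α B₂`, cyclicity of the trace gives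
`tr(J_α B₂ Q B₁) = tr(Q M)`. Taking for `Q` the orthogonal factor of the polar decomposition
makes `Q M = (MᵀM)^{1/2}`, whose trace is at least `n |det M|^{1/n}` by AM–GM on its eigenvalues,
and `|det M| = (1 - α) (det A₁ det A₂)^{1/2} ≥ (1 - α) λⁿ`. The remaining terms `tr(J_α Aᵢ)` are at
most `(α - 1) λ + (n - 1) Λ` because the diagonal entries of `Aᵢ` lie in `[λ, Λ]`. -/

section MatrixSqrt

variable {n : ℕ} {A : Matrix (Fin n) (Fin n) ℝ}

lemma msqrt_mul_self (hA : A.PosSemidef) : msqrt A * msqrt A = A := by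
  classical
  set U : Matrix (Fin n) (Fin n) ℝ := (hA.1.eigenvectorUnitary : Matrix (Fin n) (Fin n) ℝ)
  set D := diagonal ((RCLike.ofReal : ℝ → ℝ) ∘ Real.sqrt ∘ hA.1.eigenvalues)
  have hU : star U * U = 1 := Unitary.star_mul_self_of_mem hA.1.eigenvectorUnitary.2
  have hD : D * D = diagonal ((RCLike.ofReal : ℝ → ℝ) ∘ hA.1.eigenvalues) := by
    rw [diagonal_mul_diagonal]
    congr 1
    funext i
    simp [Real.mul_self_sqrt (hA.eigenvalues_nonneg i)]
  have hmsqrt : msqrt A = U * D * star U := by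
    unfold msqrt
    rw [dif_pos hA]
  conv_rhs => rw [hA.1.spectral_theorem, Unitary.conjStarAlgAut_apply]
  calc msqrt A * msqrt A = U * D * (star U * U) * D * star U := by
        simp only [hmsqrt, Matrix.mul_assoc]
    _ = _ := by rw [hU, Matrix.mul_one, Matrix.mul_assoc U, hD]

lemma posSemidef_msqrt (hA : A.PosSemidef) : (msqrt A).PosSemidef := by
  classical
  have hD : (diagonal ((RCLike.ofReal : ℝ → ℝ) ∘ Real.sqrt ∘ hA.1.eigenvalues)).PosSemidef := by
    rw [posSemidef_diagonal_iff]
    intro i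
    simp [Real.sqrt_nonneg]
  unfold msqrt
  rw [dif_pos hA]
  simpa [star_eq_conjTranspose] using
    hD.mul_mul_conjTranspose_same (hA.1.eigenvectorUnitary : Matrix (Fin n) (Fin n) ℝ)

lemma transpose_msqrt (hA : A.PosSemidef) : (msqrt A)ᵀ = msqrt A := by
  simpa [IsHermitian, conjTranspose_eq_transpose_of_trivial] using (posSemidef_msqrt hA).1

end MatrixSqrt

lemma Matrix.PosSemidef.natCast_card_mul_det_rpow_le_trace {ι : Type*} [Fintype ι]
    [DecidableEq ι] {S : Matrix ι ι ℝ} (hS : S.PosSemidef) :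
    (Fintype.card ι : ℝ) * S.det ^ ((Fintype.card ι : ℝ)⁻¹) ≤ S.trace := by
  rcases (Fintype.card ι).eq_zero_or_pos with hcard | hcard
  · simpa [hcard] using hS.trace_nonneg
  have hAMGM := Real.geom_mean_le_arith_mean Finset.univ (fun _ => (1 : ℝ)) hS.1.eigenvalues
    (fun _ _ => zero_le_one) (by simpa using hcard) (fun i _ => hS.eigenvalues_nonneg i)
  simp only [Real.rpow_one, Finset.sum_const, Finset.card_univ, nsmul_eq_mul, mul_one,
    one_mul] at hAMGM
  rw [hS.1.det_eq_prod_eigenvalues, hS.1.trace_eq_sum_eigenvalues]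
  simp only [RCLike.ofReal_real_eq_id, id_eq]
  rw [le_div_iff₀ (by positivity)] at hAMGM
  linarith

lemma Matrix.posSemidef_transpose_mul_self {m k : Type*} [Fintype m] [Fintype k]
    (M : Matrix m k ℝ) : (Mᵀ * M).PosSemidef := by
  simpa [conjTranspose_eq_transpose_of_trivial] using posSemidef_conjTranspose_mul_self M

section Polar

variable {n : ℕ} (M : Matrix (Fin n) (Fin n) ℝ)

lemma isOrthMat_msqrt_transpose_mul_self_mul_inv (hM : IsUnit M.det) :
    IsOrthMat (msqrt (Mᵀ * M) * M⁻¹) := by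
  have hP := posSemidef_transpose_mul_self M
  have hMT : IsUnit Mᵀ.det := by rwa [det_transpose]
  have hleft : (msqrt (Mᵀ * M) * M⁻¹)ᵀ * (msqrt (Mᵀ * M) * M⁻¹) = 1 := by
    calc (msqrt (Mᵀ * M) * M⁻¹)ᵀ * (msqrt (Mᵀ * M) * M⁻¹)
        = (Mᵀ)⁻¹ * (msqrt (Mᵀ * M) * msqrt (Mᵀ * M)) * M⁻¹ := by
          rw [transpose_mul, ← transpose_nonsing_inv, transpose_msqrt hP]
          simp only [Matrix.mul_assoc]
      _ = ((Mᵀ)⁻¹ * Mᵀ) * (M * M⁻¹) := by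
          rw [msqrt_mul_self hP]
          simp only [Matrix.mul_assoc]
      _ = 1 := by rw [nonsing_inv_mul _ hMT, mul_nonsing_inv _ hM, Matrix.one_mul]
  exact ⟨mul_eq_one_comm.mp hleft, hleft⟩

lemma abs_det_eq_det_msqrt_transpose_mul_self : |M.det| = (msqrt (Mᵀ * M)).det := by
  have hP := posSemidef_transpose_mul_self M
  have hsq : (msqrt (Mᵀ * M)).det ^ 2 = M.det ^ 2 := by
    rw [sq, ← det_mul, msqrt_mul_self hP, det_mul, det_transpose, sq]
  rw [← abs_of_nonneg (posSemidef_msqrt hP).det_nonneg]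
  exact (sq_eq_sq_iff_abs_eq_abs _ _).mp hsq.symm

lemma natCast_mul_abs_det_rpow_le_trace_msqrt :
    (n : ℝ) * |M.det| ^ ((n : ℝ)⁻¹) ≤ (msqrt (Mᵀ * M)).trace := by
  have hP := posSemidef_transpose_mul_self M
  simpa [abs_det_eq_det_msqrt_transpose_mul_self] using
    (posSemidef_msqrt hP).natCast_card_mul_det_rpow_le_trace

end Polar

namespace UnifElliptic

variable {n : ℕ} {lam Lam : ℝ} {A : Matrix (Fin n) (Fin n) ℝ}

lemma isHermitian (hA : UnifElliptic lam Lam A) : A.IsHermitian := by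
  rw [IsHermitian, conjTranspose_eq_transpose_of_trivial]
  exact hA.1

lemma posDef (hlam : 0 < lam) (hA : UnifElliptic lam Lam A) : A.PosDef := by
  refine posDef_iff_dotProduct_mulVec.mpr ⟨hA.isHermitian, fun x hx => ?_⟩
  have hxx : 0 < x ⬝ᵥ x := by simpa using dotProduct_star_self_pos_iff.mpr hx
  simpa using (mul_pos hlam hxx).trans_le (hA.2 x).1

lemma diag_mem_Icc (hA : UnifElliptic lam Lam A) (i : Fin n) : A i i ∈ Set.Icc lam Lam := by
  simpa [mulVec_single, single_dotProduct] using hA.2 (Pi.single i 1)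

lemma le_eigenvalues (hA : UnifElliptic lam Lam A) (i : Fin n) :
    lam ≤ hA.isHermitian.eigenvalues i := by
  set v := hA.isHermitian.eigenvectorBasis i
  have hv : (v : Fin n → ℝ) ⬝ᵥ v = 1 := by
    have h := real_inner_self_eq_norm_sq v
    rw [EuclideanSpace.inner_eq_star_dotProduct,
      hA.isHermitian.eigenvectorBasis.orthonormal.1 i] at h
    simpa using h
  simpa [hA.isHermitian.eigenvalues_eq, hv] using (hA.2 v).1

lemma pow_le_det (hlam : 0 < lam) (hA : UnifElliptic lam Lam A) : lam ^ n ≤ A.det := by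
  rw [hA.isHermitian.det_eq_prod_eigenvalues]
  simpa using Finset.prod_le_prod (s := Finset.univ) (fun _ _ => hlam.le)
    (fun i _ => hA.le_eigenvalues i)

end UnifElliptic

lemma trace_Jmat_mul_le {n : ℕ} (hn : 0 < n) {lam Lam α : ℝ} (hα : α ≤ 1)
    {A : Matrix (Fin n) (Fin n) ℝ} (hA : UnifElliptic lam Lam A) :
    (Jmat n α * A).trace ≤ (α - 1) * lam + ((n : ℝ) - 1) * Lam := by
  obtain ⟨m, rfl⟩ := Nat.exists_eq_add_one_of_ne_zero hn.ne'
  have hsum : ∑ i : Fin m, A i.succ i.succ ≤ m * Lam := by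
    simpa using Finset.sum_le_sum fun (i : Fin m) (_ : i ∈ Finset.univ) =>
      (hA.diag_mem_Icc i.succ).2
  have h0 : (α - 1) * A 0 0 ≤ (α - 1) * lam :=
    mul_le_mul_of_nonpos_left (hA.diag_mem_Icc 0).1 (by linarith)
  simp only [Jmat, trace, diag, diagonal_mul, Fin.sum_univ_succ, Fin.val_zero, Fin.val_succ,
    if_true, Nat.succ_ne_zero, if_false, one_mul]
  push_cast
  linarith

lemma det_Jmat {n : ℕ} (hn : 0 < n) (α : ℝ) : (Jmat n α).det = α - 1 := by
  obtain ⟨m, rfl⟩ := Nat.exists_eq_add_one_of_ne_zero hn.ne'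
  simp [Jmat, det_diagonal]

lemma pow_mul_le_abs_det_msqrt_mul_Jmat_mul_msqrt {n : ℕ} (hn : 0 < n) {lam Lam α : ℝ}
    (hlam : 0 < lam) (hα : α ≤ 1) {A₁ A₂ : Matrix (Fin n) (Fin n) ℝ}
    (hA₁ : UnifElliptic lam Lam A₁) (hA₂ : UnifElliptic lam Lam A₂) :
    lam ^ n * (1 - α) ≤ |(msqrt A₁ * Jmat n α * msqrt A₂).det| := by
  have hP₁ := (hA₁.posDef hlam).posSemidef
  have hP₂ := (hA₂.posDef hlam).posSemidef
  have hdet₁ := (posSemidef_msqrt hP₁).det_nonneg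
  have hdet₂ := (posSemidef_msqrt hP₂).det_nonneg
  have hsq : (lam ^ n) ^ 2 ≤ ((msqrt A₁).det * (msqrt A₂).det) ^ 2 := by
    rw [mul_pow, sq (msqrt A₁).det, sq (msqrt A₂).det, sq, ← det_mul, ← det_mul,
      msqrt_mul_self hP₁, msqrt_mul_self hP₂]
    exact mul_le_mul (hA₁.pow_le_det hlam) (hA₂.pow_le_det hlam) (by positivity)
      (hA₁.posDef hlam).det_pos.le
  have hprod : lam ^ n ≤ (msqrt A₁).det * (msqrt A₂).det :=
    (pow_le_pow_iff_left₀ (by positivity) (by positivity) two_ne_zero).mp hsq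
  rw [det_mul, det_mul, det_Jmat hn, abs_mul, abs_mul, abs_of_nonneg hdet₁, abs_of_nonneg hdet₂,
    abs_of_nonpos (by linarith)]
  nlinarith

theorem stmt6_general {n : ℕ} (hn : 2 ≤ n)
    (lam Lam : ℝ) (hlam : 0 < lam)
    (α : ℝ) (hα : α ∈ Set.Ioo (0 : ℝ) 1) :
    ∀ A1 A2 : Matrix (Fin n) (Fin n) ℝ,
      UnifElliptic lam Lam A1 → UnifElliptic lam Lam A2 →
      ∃ Q, IsOrthMat Q ∧
        Matrix.trace (Jmat n α * (A1 + A2 - (2 : ℝ) • (msqrt A2 * Q * msqrt A1))) ≤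
          2 * (((n : ℝ) - 1) * Lam -
            ((1 - α) + (n : ℝ) * (1 - α) ^ ((1 : ℝ) / n)) * lam) := by
  intro A1 A2 hA1 hA2
  have hn₀ : 0 < n := by omega
  have hα₁ : 0 < 1 - α := sub_pos.mpr hα.2
  have hdet := pow_mul_le_abs_det_msqrt_mul_Jmat_mul_msqrt hn₀ hlam hα.2.le hA1 hA2
  set M := msqrt A1 * Jmat n α * msqrt A2
  have hM : IsUnit M.det :=
    isUnit_iff_ne_zero.mpr (abs_pos.mp ((by positivity : 0 < lam ^ n * (1 - α)).trans_le hdet))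
  refine ⟨msqrt (Mᵀ * M) * M⁻¹, isOrthMat_msqrt_transpose_mul_self_mul_inv M hM, ?_⟩
  have hcoupling : (Jmat n α * (msqrt A2 * (msqrt (Mᵀ * M) * M⁻¹) * msqrt A1)).trace =
      (msqrt (Mᵀ * M)).trace := by
    calc (Jmat n α * (msqrt A2 * (msqrt (Mᵀ * M) * M⁻¹) * msqrt A1)).trace
        = ((Jmat n α * msqrt A2) * (msqrt (Mᵀ * M) * M⁻¹ * msqrt A1)).trace := by
          simp only [Matrix.mul_assoc]
      _ = (msqrt (Mᵀ * M) * (M⁻¹ * M)).trace := by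
          rw [trace_mul_comm]
          simp only [M, Matrix.mul_assoc]
      _ = (msqrt (Mᵀ * M)).trace := by rw [nonsing_inv_mul _ hM, Matrix.mul_one]
  have htrace : (n : ℝ) * (lam * (1 - α) ^ ((1 : ℝ) / n)) ≤ (msqrt (Mᵀ * M)).trace := by
    calc (n : ℝ) * (lam * (1 - α) ^ ((1 : ℝ) / n))
        = n * (lam ^ n * (1 - α)) ^ ((n : ℝ)⁻¹) := by
          rw [Real.mul_rpow (by positivity) hα₁.le, Real.pow_rpow_inv_natCast hlam.le hn₀.ne',
            one_div]
      _ ≤ n * |M.det| ^ ((n : ℝ)⁻¹) := by gcongr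
      _ ≤ (msqrt (Mᵀ * M)).trace := natCast_mul_abs_det_rpow_le_trace_msqrt M
  have h₁ := trace_Jmat_mul_le hn₀ hα.2.le hA1
  have h₂ := trace_Jmat_mul_le hn₀ hα.2.le hA2
  rw [Matrix.mul_sub, Matrix.mul_add, trace_sub, trace_add, Matrix.mul_smul, trace_smul,
    hcoupling, smul_eq_mul]
  linarith

/-- the minimal coupling trace estimate (Lemma 4.6). -/
theorem stmt6 {n : ℕ} (hn : 2 ≤ n)
    (lam Lam : ℝ) (hlam : 0 < lam) (hlL : lam ≤ Lam)
    (α : ℝ) (hα : α ∈ Set.Ioo (0 : ℝ) 1) :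
    ∀ A1 A2 : Matrix (Fin n) (Fin n) ℝ,
      UnifElliptic lam Lam A1 → UnifElliptic lam Lam A2 →
      ∃ Q, IsOrthMat Q ∧
        Matrix.trace (Jmat n α * (A1 + A2 - (2 : ℝ) • (msqrt A2 * Q * msqrt A1))) ≤
          2 * (((n : ℝ) - 1) * Lam -
            ((1 - α) + (n : ℝ) * (1 - α) ^ ((1 : ℝ) / n)) * lam) :=
  stmt6_general hn lam Lam hlam α hα
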